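/- Consider the linear model y_i = x_iᵀβ* + ε_i for i = 1,…,n, where the ε_i are independent with mean 0 and variances σ_i², independent of the x_i, and ‖x_i‖₂ = 1 for all i. Let σ_(k) denote the k-th smallest value among {σ_i}_{i=1}^n and assume σ_(⌈αn⌉) > 0. Define ψ⁻(k) = min_{T: |T|=k} λ_min(Σ_{i∈T} x_i x_iᵀ), suppose there is a constant c₁ > 0 such that ψ⁻(⌈αn⌉) ≥ ⌈αn⌉/c₁, and fix α ≥ 4c₁/(1 + 4c₁). Run the ITSM algorithm: β_0 is the least squares estimator on all n samples, and for each t, S_t is a subset of size ⌈αn⌉ minimizing Σ_{i∈S} (y_i − x_iᵀβ_t)² over all subsets of size ⌈αn⌉, and β_{t+1} = (X_{S_t}ᵀ X_{S_t})^{-1} X_{S_t}ᵀ y_{S_t}. If T ≥ log₂(‖β_0 − β*‖₂ / σ_(⌈αn⌉)), then with probability at least 1 − T(1+4c₁)/(4c₁n), ‖β_T − β*‖₂ ≤ (1 + 4c₁)·σ_(⌈αn⌉). -/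

import Mathlib

set_option autoImplicit false

open MeasureTheory ProbabilityTheory Finset
open scoped ENNReal NNReal

/-- The smallest eigenvalue of a matrix. -/
noncomputable def lambdaMin {d : ℕ} (M : Matrix (Fin d) (Fin d) ℝ) : ℝ :=
  sInf {r : ℝ | ∃ v : Fin d → ℝ, v ≠ 0 ∧ M.mulVec v = r • v}

/-- The Gram matrix `∑_{i ∈ S} x_i x_iᵀ` of a subset of the sample points. -/
noncomputable def gramMatrix {n d : ℕ} (x : Fin n → EuclideanSpace ℝ (Fin d))
    (S : Finset (Fin n)) : Matrix (Fin d) (Fin d) ℝ :=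
  ∑ i ∈ S, Matrix.of fun j k => x i j * x i k

/-- `ψ⁻(k)`: the minimum over all size-`k` subsets `T` of the smallest eigenvalue
of `∑_{i ∈ T} x_i x_iᵀ`. -/
noncomputable def psiMinus {n d : ℕ} (x : Fin n → EuclideanSpace ℝ (Fin d)) (k : ℕ) : ℝ :=
  sInf {r : ℝ | ∃ T : Finset (Fin n), T.card = k ∧ r = lambdaMin (gramMatrix x T)}

/-- `orderStat f k` is the `k`-th smallest (0-indexed) value among `f 0, …, f (n-1)`. -/
noncomputable def orderStat {n : ℕ} (f : Fin n → ℝ) (k : Fin n) : ℝ := f (Tuple.sort f k)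

lemma ceil_pred_lt (α : ℝ) (n : ℕ) (hn : 0 < n) (hα1 : α ≤ 1) : ⌈α * (n : ℝ)⌉₊ - 1 < n := by
  have h : ⌈α * (n : ℝ)⌉₊ ≤ n := by
    rw [Nat.ceil_le]
    calc α * (n : ℝ) ≤ 1 * (n : ℝ) := by nlinarith [Nat.cast_nonneg (α := ℝ) n]
      _ = (n : ℝ) := one_mul _
  omega

/-!
Let `K = ⌈αn⌉` and let `S*` be the `K` samples of smallest noise level. Then
`𝔼 ∑_{i∈S*} |εᵢ| ≤ K σ_(K)`, so by Chebyshev `∑_{i∈S*} |εᵢ| ≤ 2K σ_(K)` outside an event of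
probability at most `1/K`. On that event every ITSM step contracts the error `δ = ‖β_t - β*‖`:
the residuals `rᵢ = εᵢ - ⟪xᵢ, β_t - β*⟫` are within `δ` of the noise, and the trimmed set keeps
residuals no larger than the ones it discards, so trading `S_t \ S*` for `S* \ S_t` gives
`∑_{i∈S_t} |εᵢ| ≤ 2K σ_(K) + 2(n - K) δ`. As the Gram matrix of `S_t` has smallest eigenvalue
at least `K / c₁` and `4c₁(n - K) ≤ K` (this is the condition on `α`), we get
`‖β_{t+1} - β*‖ ≤ δ / 2 + 2c₁ σ_(K)`. After `T ≥ log₂(‖β₀ - β*‖ / σ_(K))` steps the error is at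
most `(1 + 4c₁) σ_(K)`, and a union bound over the `T` steps gives the probability.
-/

open scoped RealInnerProductSpace Matrix
open WithLp

lemma sum_apply_mul_apply_eq_inner {ι : Type*} [Fintype ι] (u v : EuclideanSpace ℝ ι) :
    ∑ l, u l * v l = ⟪u, v⟫ := by
  simp [EuclideanSpace.inner_eq_star_dotProduct, dotProduct, mul_comm]

section Gram

variable {n d : ℕ} (x : Fin n → EuclideanSpace ℝ (Fin d)) (S : Finset (Fin n))

lemma toEuclideanLin_gramMatrix_apply (v : EuclideanSpace ℝ (Fin d)) :
    Matrix.toEuclideanLin (gramMatrix x S) v = ∑ i ∈ S, ⟪x i, v⟫ • x i := by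
  ext j
  simp only [Matrix.toLpLin_apply, gramMatrix, Matrix.sum_mulVec,
    ← sum_apply_mul_apply_eq_inner]
  simp [Matrix.mulVec, dotProduct, mul_sum, mul_comm, mul_left_comm]

lemma inner_toEuclideanLin_gramMatrix (v w : EuclideanSpace ℝ (Fin d)) :
    ⟪Matrix.toEuclideanLin (gramMatrix x S) v, w⟫ = ∑ i ∈ S, ⟪x i, v⟫ * ⟪x i, w⟫ := by
  simp [toEuclideanLin_gramMatrix_apply, sum_inner, real_inner_smul_left]

lemma gramMatrix_posSemidef : (gramMatrix x S).PosSemidef := by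
  rw [← Matrix.isPositive_toEuclideanLin_iff]
  refine ⟨fun v w => ?_, fun v => ?_⟩
  · rw [inner_toEuclideanLin_gramMatrix, real_inner_comm, inner_toEuclideanLin_gramMatrix]
    simp_rw [mul_comm]
  · simpa [inner_toEuclideanLin_gramMatrix, ← sq] using sum_nonneg fun i _ => sq_nonneg ⟪x i, v⟫

end Gram

section LambdaMin

variable {d : ℕ} {M : Matrix (Fin d) (Fin d) ℝ}

lemma Matrix.PosSemidef.nonneg_of_mulVec_eq_smul (hM : M.PosSemidef) {r : ℝ} {v : Fin d → ℝ}
    (hv : v ≠ 0) (h : M *ᵥ v = r • v) : 0 ≤ r := by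
  have hvv : 0 < v ⬝ᵥ v := by simpa using (Matrix.dotProduct_self_star_pos_iff (v := v)).mpr hv
  have := hM.dotProduct_mulVec_nonneg v
  rw [h, dotProduct_smul, star_trivial, smul_eq_mul] at this
  exact nonneg_of_mul_nonneg_left this hvv

lemma Matrix.PosSemidef.lambdaMin_nonneg (hM : M.PosSemidef) : 0 ≤ lambdaMin M :=
  Real.sInf_nonneg fun _ ⟨_, hv, h⟩ => hM.nonneg_of_mulVec_eq_smul hv h

/-- The bottom of the Rayleigh quotient is an eigenvalue, hence bounded below by `lambdaMin`. -/
lemma Matrix.PosSemidef.lambdaMin_mul_norm_sq_le (hM : M.PosSemidef)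
    (v : EuclideanSpace ℝ (Fin d)) : lambdaMin M * ‖v‖ ^ 2 ≤ ⟪Matrix.toEuclideanLin M v, v⟫ := by
  rcases subsingleton_or_nontrivial (EuclideanSpace ℝ (Fin d)) with _ | _
  · simp [Subsingleton.elim v 0]
  obtain ⟨hsymm, hpos⟩ := Matrix.isPositive_toEuclideanLin_iff.mpr hM
  set T := Matrix.toEuclideanLin M
  have hbdd : BddBelow (Set.range fun u : {u : EuclideanSpace ℝ (Fin d) // u ≠ 0} =>
      RCLike.re ⟪T u, u⟫ / ‖(u : EuclideanSpace ℝ (Fin d))‖ ^ 2) :=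
    ⟨0, by rintro _ ⟨u, rfl⟩; exact div_nonneg (hpos u) (sq_nonneg _)⟩
  obtain ⟨w, hw⟩ := hsymm.hasEigenvalue_iInf_of_finiteDimensional.exists_hasEigenvector
  have hmin : lambdaMin M ≤ ⨅ u : {u : EuclideanSpace ℝ (Fin d) // u ≠ 0},
      RCLike.re ⟪T u, u⟫ / ‖(u : EuclideanSpace ℝ (Fin d))‖ ^ 2 :=
    csInf_le ⟨0, fun _ ⟨_, hv, h⟩ => hM.nonneg_of_mulVec_eq_smul hv h⟩
      ⟨ofLp w, by simpa using hw.2, congrArg ofLp hw.apply_eq_smul⟩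
  rcases eq_or_ne v 0 with rfl | hv
  · simp
  have hv2 : 0 < ‖v‖ ^ 2 := by positivity
  calc lambdaMin M * ‖v‖ ^ 2 ≤ (RCLike.re ⟪T v, v⟫ / ‖v‖ ^ 2) * ‖v‖ ^ 2 :=
        mul_le_mul_of_nonneg_right (hmin.trans (ciInf_le hbdd ⟨v, hv⟩)) hv2.le
    _ = ⟪T v, v⟫ := div_mul_cancel₀ _ hv2.ne'

end LambdaMin

lemma psiMinus_le_lambdaMin {n d : ℕ} (x : Fin n → EuclideanSpace ℝ (Fin d))
    {S : Finset (Fin n)} {k : ℕ} (hS : S.card = k) :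
    psiMinus x k ≤ lambdaMin (gramMatrix x S) :=
  csInf_le ⟨0, fun _ ⟨T, _, hT⟩ => hT ▸ (gramMatrix_posSemidef x T).lambdaMin_nonneg⟩ ⟨S, hS, rfl⟩

lemma mul_norm_le_norm_apply_of_coercive {E : Type*} [NormedAddCommGroup E]
    [InnerProductSpace ℝ E] (T : E →ₗ[ℝ] E) {a : ℝ} (hT : ∀ v, a * ‖v‖ ^ 2 ≤ ⟪T v, v⟫) (v : E) :
    a * ‖v‖ ≤ ‖T v‖ := by
  rcases (norm_nonneg v).eq_or_lt with hv | hv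
  · simp [← hv]
  refine le_of_mul_le_mul_right ?_ hv
  calc a * ‖v‖ * ‖v‖ = a * ‖v‖ ^ 2 := by ring
    _ ≤ ⟪T v, v⟫ := hT v
    _ ≤ ‖T v‖ * ‖v‖ := real_inner_le_norm _ _

section Coercive

variable {ι : Type*} [Fintype ι] [DecidableEq ι] {M : Matrix ι ι ℝ} {a : ℝ}

lemma Matrix.isUnit_of_coercive (ha : 0 < a)
    (hM : ∀ v, a * ‖v‖ ^ 2 ≤ ⟪Matrix.toEuclideanLin M v, v⟫) : IsUnit M := by
  rw [← Matrix.mulVec_injective_iff_isUnit]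
  have hinj := (Matrix.toEuclideanLin M).ker_eq_bot.mp <| LinearMap.ker_eq_bot'.mpr fun v hv => by
    have := mul_norm_le_norm_apply_of_coercive _ hM v
    rw [hv, norm_zero] at this
    exact norm_le_zero_iff.mp (nonpos_of_mul_nonpos_right this ha)
  intro u w huw
  simpa using hinj (a₁ := toLp 2 u) (a₂ := toLp 2 w) (congrArg (toLp 2) huw)

lemma Matrix.mul_norm_toEuclideanLin_inv_le_of_coercive (ha : 0 < a)
    (hM : ∀ v, a * ‖v‖ ^ 2 ≤ ⟪Matrix.toEuclideanLin M v, v⟫) (w : EuclideanSpace ℝ ι) :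
    a * ‖Matrix.toEuclideanLin M⁻¹ w‖ ≤ ‖w‖ := by
  have hdet := M.isUnit_iff_isUnit_det.mp (Matrix.isUnit_of_coercive ha hM)
  have hw : Matrix.toEuclideanLin M (Matrix.toEuclideanLin M⁻¹ w) = w := by
    rw [Matrix.toLpLin_apply, Matrix.toLpLin_apply]
    simp [Matrix.mulVec_mulVec, M.mul_nonsing_inv hdet]
  simpa [hw] using mul_norm_le_norm_apply_of_coercive _ hM (Matrix.toEuclideanLin M⁻¹ w)

end Coercive

lemma lsq_sub_eq_toEuclideanLin_inv_sum {n d : ℕ} {x : Fin n → EuclideanSpace ℝ (Fin d)}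
    {S : Finset (Fin n)} (hG : IsUnit (gramMatrix x S).det)
    {βstar β' : EuclideanSpace ℝ (Fin d)} {y e : Fin n → ℝ} (hy : ∀ i, y i = ⟪x i, βstar⟫ + e i)
    (hβ' : ∀ j, β' j = ((gramMatrix x S)⁻¹ *ᵥ fun l => ∑ i ∈ S, y i * x i l) j) :
    β' - βstar = Matrix.toEuclideanLin (gramMatrix x S)⁻¹ (∑ i ∈ S, e i • x i) := by
  have hnormal : toLp 2 (fun l => ∑ i ∈ S, y i * x i l)
      = Matrix.toEuclideanLin (gramMatrix x S) βstar + ∑ i ∈ S, e i • x i := by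
    ext l
    simp [toEuclideanLin_gramMatrix_apply, hy, add_mul, sum_add_distrib]
  have hβ'eq : β' = Matrix.toEuclideanLin (gramMatrix x S)⁻¹
      (toLp 2 fun l => ∑ i ∈ S, y i * x i l) := by
    ext j; exact hβ' j
  have hcancel : Matrix.toEuclideanLin (gramMatrix x S)⁻¹
      (Matrix.toEuclideanLin (gramMatrix x S) βstar) = βstar := by
    rw [Matrix.toLpLin_apply, Matrix.toLpLin_apply]
    simp [Matrix.mulVec_mulVec, Matrix.nonsing_inv_mul _ hG]
  rw [hβ'eq, hnormal, map_add, hcancel, add_sub_cancel_left]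

section Trimming

variable {ι : Type*} [DecidableEq ι]

lemma apply_le_apply_of_sum_le_sum_of_card_eq (f : ι → ℝ) {S : Finset ι}
    (hS : ∀ S' : Finset ι, S'.card = S.card → ∑ i ∈ S, f i ≤ ∑ i ∈ S', f i)
    {i j : ι} (hi : i ∈ S) (hj : j ∉ S) : f i ≤ f j := by
  have hj' : j ∉ S.erase i := fun h => hj (mem_of_mem_erase h)
  have h := hS (insert j (S.erase i)) (by rw [card_insert_of_notMem hj', card_erase_add_one hi])
  rw [← add_sum_erase S f hi, sum_insert hj'] at h
  linarith

lemma sum_sdiff_le_sum_sdiff_of_forall_le (f : ι → ℝ) {S S' : Finset ι}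
    (hcard : S.card = S'.card) (hf : ∀ i ∈ S, ∀ j ∉ S, f i ≤ f j) :
    ∑ i ∈ S \ S', f i ≤ ∑ j ∈ S' \ S, f j := by
  have hc := card_sdiff_comm hcard
  rcases (S' \ S).eq_empty_or_nonempty with h | h
  · rw [h, card_empty, card_eq_zero] at hc
    simp [hc, h]
  obtain ⟨j, hj, hjmin⟩ := (S' \ S).exists_min_image f h
  calc ∑ i ∈ S \ S', f i ≤ (S \ S').card • f j :=
        sum_le_card_nsmul _ _ _ fun i hi => hf i (mem_sdiff.mp hi).1 j (mem_sdiff.mp hj).2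
    _ = (S' \ S).card • f j := by rw [hc]
    _ ≤ ∑ j ∈ S' \ S, f j := card_nsmul_le_sum _ _ _ hjmin

lemma sum_abs_le_of_trimmed {e r : ι → ℝ} {δ : ℝ} {S S' : Finset ι} (hcard : S.card = S'.card)
    (hclose : ∀ i, |r i - e i| ≤ δ) (htrim : ∀ i ∈ S, ∀ j ∉ S, |r i| ≤ |r j|) :
    ∑ i ∈ S, |e i| ≤ ∑ i ∈ S', |e i| + 2 * (S \ S').card * δ := by
  have he (i : ι) : |e i| ≤ |r i| + δ := by
    linarith [abs_sub_abs_le_abs_sub (e i) (r i), abs_sub_comm (e i) (r i), hclose i]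
  have hr (i : ι) : |r i| ≤ |e i| + δ := by
    linarith [abs_sub_abs_le_abs_sub (r i) (e i), hclose i]
  have hswap := sum_sdiff_le_sum_sdiff_of_forall_le (fun i => |r i|) hcard htrim
  have hS'S : ∑ i ∈ S' \ S, |r i| ≤ ∑ i ∈ S' \ S, |e i| + (S \ S').card * δ := by
    simpa [sum_add_distrib, card_sdiff_comm hcard] using
      sum_le_sum fun i (_ : i ∈ S' \ S) => hr i
  have hSS' : ∑ i ∈ S \ S', |e i| ≤ ∑ i ∈ S \ S', |r i| + (S \ S').card * δ := by
    simpa [sum_add_distrib] using sum_le_sum fun i (_ : i ∈ S \ S') => he i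
  rw [← sum_inter_add_sum_sdiff S S', ← sum_inter_add_sum_sdiff S' S, inter_comm]
  linarith

end Trimming

section Chebyshev

variable {Ω : Type*} [MeasurableSpace Ω] {P : Measure Ω} [IsProbabilityMeasure P]

lemma integral_abs_le_of_integral_sq_le {X : Ω → ℝ} (hX : MemLp X 2 P) {s : ℝ} (hs : 0 ≤ s)
    (h : ∫ ω, X ω ^ 2 ∂P ≤ s ^ 2) : ∫ ω, |X ω| ∂P ≤ s := by
  have hvar := variance_nonneg |X| P
  rw [variance_eq_sub hX.abs, sub_nonneg] at hvar
  simp only [Pi.pow_apply, Pi.abs_apply, sq_abs] at hvar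
  exact (abs_le_of_sq_le_sq' (hvar.trans h) hs).2

lemma measure_two_mul_card_mul_lt_sum_abs_le {ι : Type*} {ε : ι → Ω → ℝ} (hindep : iIndepFun ε P)
    {S : Finset ι} (hL2 : ∀ i ∈ S, MemLp (ε i) 2 P) {s : ℝ} (hs : 0 < s)
    (hvar : ∀ i ∈ S, ∫ ω, ε i ω ^ 2 ∂P ≤ s ^ 2) :
    P {ω | 2 * S.card * s < ∑ i ∈ S, |ε i ω|} ≤ ENNReal.ofReal (1 / S.card) := by
  rcases S.eq_empty_or_nonempty with rfl | hS
  · simp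
  set k : ℝ := (S.card : ℝ)
  have hk : 0 < k := by simpa [k] using hS.card_pos
  set Z : Ω → ℝ := ∑ i ∈ S, |ε i|
  have hZ (ω : Ω) : Z ω = ∑ i ∈ S, |ε i ω| := by simp [Z]
  have hmean : ∫ ω, Z ω ∂P ≤ k * s := by
    simp only [hZ]
    rw [integral_finsetSum S (f := fun i ω => |ε i ω|) fun i hi =>
      (hL2 i hi).abs.integrable one_le_two]
    refine (sum_le_sum fun i hi =>
      integral_abs_le_of_integral_sq_le (hL2 i hi) hs.le (hvar i hi)).trans_eq ?_
    simp [k]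
  have hvarZ : Var[Z; P] ≤ k * s ^ 2 := by
    rw [IndepFun.variance_sum (fun i hi => (hL2 i hi).abs) fun i _ j _ hij =>
      (hindep.comp (fun _ => abs) fun _ => measurable_abs).indepFun hij]
    refine (sum_le_sum fun i hi =>
      (variance_le_expectation_sq (hL2 i hi).abs.aestronglyMeasurable).trans
        (by simpa [sq_abs] using hvar i hi)).trans_eq ?_
    simp [k]
  have hsub : {ω | 2 * k * s < ∑ i ∈ S, |ε i ω|} ⊆ {ω | k * s ≤ |Z ω - ∫ ω, Z ω ∂P|} :=
    fun ω (hω : 2 * k * s < _) => by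
      change k * s ≤ |Z ω - _|
      rw [hZ]
      exact le_abs.mpr (Or.inl (by linarith))
  refine (measure_mono hsub).trans <| (meas_ge_le_variance_div_sq
    (memLp_finsetSum' S fun i hi => (hL2 i hi).abs) (by positivity)).trans ?_
  refine ENNReal.ofReal_le_ofReal ?_
  rw [div_le_div_iff₀ (by positivity) hk]
  nlinarith

lemma one_sub_ofReal_mul_le_measure {E : Set Ω} {B : ℕ → Set Ω} {T : ℕ} {q : ℝ}
    (hE : ∀ ω, (∀ t < T, ω ∉ B t) → ω ∈ E) (hB : ∀ t < T, P (B t) ≤ ENNReal.ofReal q) :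
    1 - ENNReal.ofReal (T * q) ≤ P E := by
  have hEc : Eᶜ ⊆ ⋃ t ∈ range T, B t := fun ω hω => by
    by_contra h
    simp only [Set.mem_iUnion, mem_range, not_exists] at h
    exact hω (hE ω h)
  have hPEc : P Eᶜ ≤ ENNReal.ofReal (T * q) := by
    calc P Eᶜ ≤ ∑ t ∈ range T, P (B t) :=
          (measure_mono hEc).trans (measure_biUnion_finset_le _ _)
      _ ≤ ∑ t ∈ range T, ENNReal.ofReal q := sum_le_sum fun t ht => hB t (mem_range.mp ht)
      _ = ENNReal.ofReal (T * q) := by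
        rw [sum_const, card_range, nsmul_eq_mul, ← ENNReal.ofReal_natCast,
          ← ENNReal.ofReal_mul (Nat.cast_nonneg _)]
  refine tsub_le_iff_right.mpr ?_
  calc 1 = P Set.univ := measure_univ.symm
    _ ≤ P E + P Eᶜ := measure_univ_le_add_compl E
    _ ≤ P E + _ := by gcongr

end Chebyshev

lemma exists_card_eq_forall_le_orderStat {n : ℕ} (f : Fin n → ℝ) {k : ℕ} (hk : k - 1 < n) :
    ∃ S : Finset (Fin n), S.card = k ∧ ∀ i ∈ S, f i ≤ orderStat f ⟨k - 1, hk⟩ := by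
  have hkn : k ≤ n := by omega
  refine ⟨univ.map ((Fin.castLEEmb hkn).trans (Tuple.sort f).toEmbedding), by simp, ?_⟩
  simp only [mem_map, mem_univ, true_and, forall_exists_index, forall_apply_eq_imp_iff]
  intro j
  exact Tuple.monotone_sort f
    (show Fin.castLE hkn j ≤ ⟨k - 1, hk⟩ from Fin.le_iff_val_le_val.mpr (by simp; omega))

lemma four_mul_le_one_add_four_mul_ceil {c α : ℝ} (hc : 0 < c) (hα : 4 * c / (1 + 4 * c) ≤ α)
    (n : ℕ) : 4 * c * n ≤ (1 + 4 * c) * ⌈α * (n : ℝ)⌉₊ := by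
  rw [div_le_iff₀ (by positivity)] at hα
  nlinarith [Nat.le_ceil (α * n), (Nat.cast_nonneg n : (0 : ℝ) ≤ n)]

section Step

variable {n d : ℕ} {x : Fin n → EuclideanSpace ℝ (Fin d)}
  {βstar β β' : EuclideanSpace ℝ (Fin d)} {y e : Fin n → ℝ} {S Sstar : Finset (Fin n)}

lemma mul_norm_lsq_sub_le (hx : ∀ i, ‖x i‖ = 1) (hy : ∀ i, y i = ⟪x i, βstar⟫ + e i)
    (hcard : S.card = Sstar.card)
    (hmin : ∀ S' : Finset (Fin n), S'.card = S.card →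
      ∑ i ∈ S, (y i - ⟪x i, β⟫) ^ 2 ≤ ∑ i ∈ S', (y i - ⟪x i, β⟫) ^ 2)
    {a : ℝ} (ha : 0 < a) (hlam : a ≤ lambdaMin (gramMatrix x S))
    (hβ' : ∀ j, β' j = ((gramMatrix x S)⁻¹ *ᵥ fun l => ∑ i ∈ S, y i * x i l) j) :
    a * ‖β' - βstar‖ ≤ ∑ i ∈ Sstar, |e i| + 2 * (S \ Sstar).card * ‖β - βstar‖ := by
  have hcoer (v : EuclideanSpace ℝ (Fin d)) :
      a * ‖v‖ ^ 2 ≤ ⟪Matrix.toEuclideanLin (gramMatrix x S) v, v⟫ :=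
    (mul_le_mul_of_nonneg_right hlam (sq_nonneg _)).trans
      ((gramMatrix_posSemidef x S).lambdaMin_mul_norm_sq_le v)
  have hdet := (Matrix.isUnit_iff_isUnit_det _).mp (Matrix.isUnit_of_coercive ha hcoer)
  have hclose (i : Fin n) : |(y i - ⟪x i, β⟫) - e i| ≤ ‖β - βstar‖ := by
    calc |(y i - ⟪x i, β⟫) - e i| = |⟪x i, β - βstar⟫| := by
          rw [hy, inner_sub_right, ← abs_neg]; ring_nf
      _ ≤ ‖x i‖ * ‖β - βstar‖ := abs_real_inner_le_norm _ _
      _ = ‖β - βstar‖ := by rw [hx, one_mul]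
  have htrim : ∀ i ∈ S, ∀ j ∉ S, |y i - ⟪x i, β⟫| ≤ |y j - ⟪x j, β⟫| := fun i hi j hj =>
    sq_le_sq.mp (apply_le_apply_of_sum_le_sum_of_card_eq _ hmin hi hj)
  calc a * ‖β' - βstar‖ ≤ ‖∑ i ∈ S, e i • x i‖ := by
        rw [lsq_sub_eq_toEuclideanLin_inv_sum hdet hy hβ']
        exact Matrix.mul_norm_toEuclideanLin_inv_le_of_coercive ha hcoer _
    _ ≤ ∑ i ∈ S, |e i| := (norm_sum_le _ _).trans_eq (by simp [norm_smul, hx])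
    _ ≤ _ := sum_abs_le_of_trimmed hcard hclose htrim

lemma norm_lsq_sub_le_half_add (hx : ∀ i, ‖x i‖ = 1) (hy : ∀ i, y i = ⟪x i, βstar⟫ + e i)
    (hcard : S.card = Sstar.card)
    (hmin : ∀ S' : Finset (Fin n), S'.card = S.card →
      ∑ i ∈ S, (y i - ⟪x i, β⟫) ^ 2 ≤ ∑ i ∈ S', (y i - ⟪x i, β⟫) ^ 2)
    {c s : ℝ} (hc : 0 < c) (hpos : 0 < Sstar.card)
    (hlam : Sstar.card / c ≤ lambdaMin (gramMatrix x S))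
    (hK : 4 * c * n ≤ (1 + 4 * c) * Sstar.card)
    (hnoise : ∑ i ∈ Sstar, |e i| ≤ 2 * Sstar.card * s)
    (hβ' : ∀ j, β' j = ((gramMatrix x S)⁻¹ *ᵥ fun l => ∑ i ∈ S, y i * x i l) j) :
    ‖β' - βstar‖ ≤ ‖β - βstar‖ / 2 + 2 * c * s := by
  set K : ℝ := (Sstar.card : ℝ)
  have hKpos : 0 < K := by simpa [K] using hpos
  have hm : ((S \ Sstar).card : ℝ) ≤ n - K := by
    have := card_le_card (show S \ Sstar ⊆ Sstarᶜ from
      fun i hi => mem_compl.mpr (mem_sdiff.mp hi).2)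
    rw [card_compl, Fintype.card_fin] at this
    rw [← Nat.cast_sub (Sstar.card_le_univ.trans_eq (Fintype.card_fin n))]
    exact_mod_cast this
  have hsep : 4 * c * (S \ Sstar).card ≤ K := by nlinarith
  have h := mul_norm_lsq_sub_le hx hy hcard hmin (div_pos hKpos hc) hlam hβ'
  rw [div_mul_eq_mul_div, div_le_iff₀ hc] at h
  refine le_of_mul_le_mul_left ?_ hKpos
  nlinarith [mul_le_mul_of_nonneg_right hsep (norm_nonneg (β - βstar)),
    mul_le_mul_of_nonneg_right hnoise hc.le]

end Step

lemma le_div_two_pow_add_of_le_half_add {u : ℕ → ℝ} {b : ℝ} (hb : 0 ≤ b) {T : ℕ}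
    (h : ∀ t < T, u (t + 1) ≤ u t / 2 + b) : u T ≤ u 0 / 2 ^ T + 2 * b := by
  induction T with
  | zero => simp [hb]
  | succ T ih =>
    calc u (T + 1) ≤ u T / 2 + b := h T T.lt_succ_self
      _ ≤ (u 0 / 2 ^ T + 2 * b) / 2 + b := by
        gcongr; exact ih fun t ht => h t (ht.trans T.lt_succ_self)
      _ = u 0 / 2 ^ (T + 1) + 2 * b := by ring

lemma le_add_two_mul_of_le_half_add_of_logb_le {u : ℕ → ℝ} {b s : ℝ} {T : ℕ} (hb : 0 ≤ b)
    (hs : 0 < s) (hu : 0 ≤ u 0) (h : ∀ t < T, u (t + 1) ≤ u t / 2 + b)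
    (hT : Real.logb 2 (u 0 / s) ≤ T) : u T ≤ s + 2 * b := by
  refine (le_div_two_pow_add_of_le_half_add hb h).trans (add_le_add_left ?_ _)
  rw [div_le_iff₀ (by positivity)]
  rcases hu.eq_or_lt with hu | hu
  · rw [← hu]; positivity
  rwa [Real.logb_le_iff_le_rpow one_lt_two (div_pos hu hs), Real.rpow_natCast,
    div_le_iff₀ hs, mul_comm] at hT

theorem stmt16_general {Ω : Type*} [MeasurableSpace Ω] (P : Measure Ω) [IsProbabilityMeasure P]
    (n d : ℕ) (hn : 0 < n)
    (x : Fin n → EuclideanSpace ℝ (Fin d)) (hx : ∀ i, ‖x i‖ = 1)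
    (βstar : EuclideanSpace ℝ (Fin d))
    (ε : Fin n → Ω → ℝ) (σ : Fin n → ℝ) (hσ : ∀ i, 0 ≤ σ i)
    (hindep : iIndepFun ε P)
    (hL2 : ∀ i, MemLp (ε i) 2 P)
    (hvar : ∀ i, ∫ ω, (ε i ω) ^ 2 ∂P = σ i ^ 2)
    (y : Fin n → Ω → ℝ)
    (hy : ∀ i ω, y i ω = (∑ j, x i j * βstar j) + ε i ω)
    (α : ℝ) (hα1 : α ≤ 1) (c₁ : ℝ) (hc₁ : 0 < c₁)
    (hα : 4 * c₁ / (1 + 4 * c₁) ≤ α)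
    (hψ : psiMinus x ⌈α * (n : ℝ)⌉₊ ≥ (⌈α * (n : ℝ)⌉₊ : ℝ) / c₁)
    -- σ_(⌈αn⌉), the ⌈αn⌉-th smallest standard deviation
    (sig : ℝ)
    (hsig : sig = orderStat σ ⟨⌈α * (n : ℝ)⌉₊ - 1, ceil_pred_lt α n hn hα1⟩)
    (hsigpos : 0 < sig)
    -- the ITSM iterates
    (βseq : ℕ → Ω → EuclideanSpace ℝ (Fin d)) (Sseq : ℕ → Ω → Finset (Fin n))
    (hScard : ∀ t ω, (Sseq t ω).card = ⌈α * (n : ℝ)⌉₊)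
    (hSmin : ∀ t ω, ∀ S' : Finset (Fin n), S'.card = ⌈α * (n : ℝ)⌉₊ →
      ∑ i ∈ Sseq t ω, (y i ω - ∑ l, x i l * βseq t ω l) ^ 2
        ≤ ∑ i ∈ S', (y i ω - ∑ l, x i l * βseq t ω l) ^ 2)
    (hβsucc : ∀ t ω, ∀ j, βseq (t + 1) ω j
      = (gramMatrix x (Sseq t ω))⁻¹.mulVec (fun l => ∑ i ∈ Sseq t ω, y i ω * x i l) j)
    (T : ℕ) :
    P {ω | Real.logb 2 (‖βseq 0 ω - βstar‖ / sig) ≤ T →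
        ‖βseq T ω - βstar‖ ≤ (1 + 4 * c₁) * sig}
      ≥ 1 - ENNReal.ofReal (T * (1 + 4 * c₁) / (4 * c₁ * n)) := by
  obtain ⟨Sstar, hSstar, hσS⟩ := exists_card_eq_forall_le_orderStat σ (ceil_pred_lt α n hn hα1)
  rw [← hsig] at hσS
  set K := ⌈α * (n : ℝ)⌉₊
  have hK : 4 * c₁ * n ≤ (1 + 4 * c₁) * K := four_mul_le_one_add_four_mul_ceil hc₁ hα n
  have hKpos : (0 : ℝ) < K := by nlinarith [show (0 : ℝ) < 4 * c₁ * n by positivity]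
  simp only [sum_apply_mul_apply_eq_inner] at hy hSmin
  set Bad := {ω | 2 * (K : ℝ) * sig < ∑ i ∈ Sstar, |ε i ω|}
  have hBad : P Bad ≤ ENNReal.ofReal (1 / K) := by
    have := measure_two_mul_card_mul_lt_sum_abs_le hindep (fun i _ => hL2 i) hsigpos fun i hi =>
      (hvar i).trans_le (pow_le_pow_left₀ (hσ i) (hσS i hi) 2)
    rwa [hSstar] at this
  have hstep (t : ℕ) (ω : Ω) (hω : ω ∉ Bad) :
      ‖βseq (t + 1) ω - βstar‖ ≤ ‖βseq t ω - βstar‖ / 2 + 2 * c₁ * sig :=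
    norm_lsq_sub_le_half_add hx (hy · ω) (by rw [hScard, hSstar])
      (fun S' hS' => hSmin t ω S' (hS'.trans (hScard t ω))) hc₁ (by exact_mod_cast hSstar ▸ hKpos)
      (hSstar ▸ hψ.le.trans (psiMinus_le_lambdaMin x (hScard t ω))) (hSstar ▸ hK)
      (hSstar ▸ not_lt.mp hω) (hβsucc t ω)
  refine le_trans ?_ (one_sub_ofReal_mul_le_measure (B := fun _ => Bad) (T := T)
    (fun ω hω hT => ?_) fun _ _ => hBad)
  · gcongr
    rw [mul_one_div, div_le_div_iff₀ hKpos (by positivity)]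
    nlinarith [(Nat.cast_nonneg T : (0 : ℝ) ≤ T)]
  · calc ‖βseq T ω - βstar‖ ≤ sig + 2 * (2 * c₁ * sig) :=
          le_add_two_mul_of_le_half_add_of_logb_le (u := fun t => ‖βseq t ω - βstar‖)
            (by positivity) hsigpos (norm_nonneg _) (fun t ht => hstep t ω (hω t ht)) hT
      _ = (1 + 4 * c₁) * sig := by ring

theorem stmt16 {Ω : Type*} [MeasurableSpace Ω] (P : Measure Ω) [IsProbabilityMeasure P]
    (n d : ℕ) (hn : 0 < n)
    (x : Fin n → EuclideanSpace ℝ (Fin d)) (hx : ∀ i, ‖x i‖ = 1)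
    (βstar : EuclideanSpace ℝ (Fin d))
    (ε : Fin n → Ω → ℝ) (σ : Fin n → ℝ) (hσ : ∀ i, 0 ≤ σ i)
    (hindep : iIndepFun ε P)
    (hL2 : ∀ i, MemLp (ε i) 2 P)
    (hmean : ∀ i, ∫ ω, ε i ω ∂P = 0)
    (hvar : ∀ i, ∫ ω, (ε i ω) ^ 2 ∂P = σ i ^ 2)
    (y : Fin n → Ω → ℝ)
    (hy : ∀ i ω, y i ω = (∑ j, x i j * βstar j) + ε i ω)
    (α : ℝ) (hα1 : α ≤ 1) (c₁ : ℝ) (hc₁ : 0 < c₁)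
    (hα : 4 * c₁ / (1 + 4 * c₁) ≤ α)
    (hψ : psiMinus x ⌈α * (n : ℝ)⌉₊ ≥ (⌈α * (n : ℝ)⌉₊ : ℝ) / c₁)
    -- σ_(⌈αn⌉), the ⌈αn⌉-th smallest standard deviation
    (sig : ℝ)
    (hsig : sig = orderStat σ ⟨⌈α * (n : ℝ)⌉₊ - 1, ceil_pred_lt α n hn hα1⟩)
    (hsigpos : 0 < sig)
    -- the ITSM iterates
    (βseq : ℕ → Ω → EuclideanSpace ℝ (Fin d)) (Sseq : ℕ → Ω → Finset (Fin n))
    (hβ0 : ∀ ω, ∀ j, βseq 0 ω j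
      = (gramMatrix x Finset.univ)⁻¹.mulVec (fun l => ∑ i, y i ω * x i l) j)
    (hScard : ∀ t ω, (Sseq t ω).card = ⌈α * (n : ℝ)⌉₊)
    (hSmin : ∀ t ω, ∀ S' : Finset (Fin n), S'.card = ⌈α * (n : ℝ)⌉₊ →
      ∑ i ∈ Sseq t ω, (y i ω - ∑ l, x i l * βseq t ω l) ^ 2
        ≤ ∑ i ∈ S', (y i ω - ∑ l, x i l * βseq t ω l) ^ 2)
    (hβsucc : ∀ t ω, ∀ j, βseq (t + 1) ω j
      = (gramMatrix x (Sseq t ω))⁻¹.mulVec (fun l => ∑ i ∈ Sseq t ω, y i ω * x i l) j)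
    (T : ℕ) :
    P {ω | Real.logb 2 (‖βseq 0 ω - βstar‖ / sig) ≤ T →
        ‖βseq T ω - βstar‖ ≤ (1 + 4 * c₁) * sig}
      ≥ 1 - ENNReal.ofReal (T * (1 + 4 * c₁) / (4 * c₁ * n)) :=
  stmt16_general P n d hn x hx βstar ε σ hσ hindep hL2 hvar y hy α hα1 c₁ hc₁ hα hψ sig hsig hsigpos
    βseq Sseq hScard hSmin hβsucc T
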